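/- Let G=(V,E,w) be a similarity ground-truth input with |V| ≥ 2, let u ∈ V be an arbitrary vertex, let w_min be the minimum weight of the edges incident to u, and set A = {x ∈ V : w(u,x) > w_min} and B = V∖A. Then every edge of the cut (A,B) has weight exactly w_min, the sparsity of (A,B) equals w_min, and (A,B) is a sparsest cut of G (every cut of G has sparsity at least w_min). -/

import Mathlib

open scoped BigOperators

attribute [local instance] Classical.propDecidable

noncomputable section

/-! ### Cluster trees -/

/-- A (binary, rooted) hierarchical-clustering tree whose leaves are labelled by
vertices of `V`. -/
inductive ClusterTree (V : Type) : Type where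
  | leaf : V → ClusterTree V
  | node : ClusterTree V → ClusterTree V → ClusterTree V

namespace ClusterTree

variable {V : Type}

/-- The list of leaf labels of the tree (left-to-right). -/
def leavesList : ClusterTree V → List V
  | leaf v => [v]
  | node L R => leavesList L ++ leavesList R

/-- The set of leaf labels of the tree. -/
def leaves [DecidableEq V] (T : ClusterTree V) : Finset V :=
  T.leavesList.toFinset

end ClusterTree

section Defs

variable {V : Type}

/-- `T` is a cluster tree for the whole (finite) vertex set `V`: its leaves are
pairwise distinct and exhaust the vertices. -/
def IsClusterTree [DecidableEq V] [Fintype V] (T : ClusterTree V) : Prop :=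
  T.leavesList.Nodup ∧ T.leaves = Finset.univ

/-- `IsSubtreeOf s T` : `s` occurs as a rooted subtree of `T`. -/
def IsSubtreeOf : ClusterTree V → ClusterTree V → Prop
  | s, ClusterTree.leaf v => s = ClusterTree.leaf v
  | s, ClusterTree.node L R => s = ClusterTree.node L R ∨ IsSubtreeOf s L ∨ IsSubtreeOf s R

/-- The subtree of `T` rooted at the lowest common ancestor of the leaves `x` and `y`. -/
def lcaSubtree [DecidableEq V] : ClusterTree V → V → V → ClusterTree V
  | ClusterTree.leaf v, _, _ => ClusterTree.leaf v
  | ClusterTree.node L R, x, y =>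
    if x ∈ L.leaves ∧ y ∈ L.leaves then lcaSubtree L x y
    else if x ∈ R.leaves ∧ y ∈ R.leaves then lcaSubtree R x y
    else ClusterTree.node L R

/-- `w(A, B) = ∑_{a ∈ A, b ∈ B} w a b`. -/
def cutWeight (w : V → V → ℝ) (A B : Finset V) : ℝ := ∑ a ∈ A, ∑ b ∈ B, w a b

/-- `w(A) = ∑_{a, b ∈ A} w a b` (ordered pairs; each edge counted twice). -/
def innerWeight (w : V → V → ℝ) (A : Finset V) : ℝ := ∑ a ∈ A, ∑ b ∈ A, w a b

/-- `∑_{e ∈ E} w(e)`, for a symmetric weight function with zero diagonal. -/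
def totalWeight [Fintype V] (w : V → V → ℝ) : ℝ := (∑ u : V, ∑ v : V, w u v) / 2

/-- Cost of a cluster tree: each internal node `N` with children `N₁, N₂`
contributes `w(V(N₁), V(N₂)) · g(|V(N₁)|, |V(N₂)|)`. -/
def treeCost [DecidableEq V] (w : V → V → ℝ) (g : ℕ → ℕ → ℝ) : ClusterTree V → ℝ
  | ClusterTree.leaf _ => 0
  | ClusterTree.node L R =>
      cutWeight w L.leaves R.leaves * g L.leaves.card R.leaves.card
        + treeCost w g L + treeCost w g R

/-- Dasgupta's cost (= `treeCost` with `g (a, b) = a + b`). -/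
def dasguptaCost [DecidableEq V] (w : V → V → ℝ) : ClusterTree V → ℝ
  | ClusterTree.leaf _ => 0
  | ClusterTree.node L R =>
      ((L.leaves.card + R.leaves.card : ℕ) : ℝ) * cutWeight w L.leaves R.leaves
        + dasguptaCost w L + dasguptaCost w R

/-! ### Generating trees -/

/-- `T` is a generating tree for the similarity graph `w` : there is a nonnegative
weight function on the internal nodes, non-increasing from leaves towards the root,
realizing every edge weight at the corresponding LCA. -/
def IsGenerating [DecidableEq V] (w : V → V → ℝ) (T : ClusterTree V) : Prop :=
  ∃ W : ClusterTree V → ℝ,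
    (∀ s, IsSubtreeOf s T → 0 ≤ W s) ∧
    (∀ L R, IsSubtreeOf (ClusterTree.node L R) T →
      ∀ s, IsSubtreeOf s L ∨ IsSubtreeOf s R → W (ClusterTree.node L R) ≤ W s) ∧
    (∀ x y, x ∈ T.leaves → y ∈ T.leaves → x ≠ y → w x y = W (lcaSubtree T x y))

/-- Generating tree in the dissimilarity setting (weights non-decreasing from
leaves towards the root). -/
def IsGeneratingDissim [DecidableEq V] (w : V → V → ℝ) (T : ClusterTree V) : Prop :=
  ∃ W : ClusterTree V → ℝ,
    (∀ s, IsSubtreeOf s T → 0 ≤ W s) ∧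
    (∀ L R, IsSubtreeOf (ClusterTree.node L R) T →
      ∀ s, IsSubtreeOf s L ∨ IsSubtreeOf s R → W s ≤ W (ClusterTree.node L R)) ∧
    (∀ x y, x ∈ T.leaves → y ∈ T.leaves → x ≠ y → w x y = W (lcaSubtree T x y))

/-- Strictly generating tree (similarity setting). -/
def IsStrictlyGenerating [DecidableEq V] (w : V → V → ℝ) (T : ClusterTree V) : Prop :=
  ∃ W : ClusterTree V → ℝ,
    (∀ s, IsSubtreeOf s T → 0 ≤ W s) ∧
    (∀ L R, IsSubtreeOf (ClusterTree.node L R) T →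
      ∀ s, IsSubtreeOf s L ∨ IsSubtreeOf s R → W (ClusterTree.node L R) < W s) ∧
    (∀ x y, x ∈ T.leaves → y ∈ T.leaves → x ≠ y → w x y = W (lcaSubtree T x y))

/-- Strictly generating tree (dissimilarity setting). -/
def IsStrictlyGeneratingDissim [DecidableEq V] (w : V → V → ℝ) (T : ClusterTree V) : Prop :=
  ∃ W : ClusterTree V → ℝ,
    (∀ s, IsSubtreeOf s T → 0 ≤ W s) ∧
    (∀ L R, IsSubtreeOf (ClusterTree.node L R) T →
      ∀ s, IsSubtreeOf s L ∨ IsSubtreeOf s R → W s < W (ClusterTree.node L R)) ∧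
    (∀ x y, x ∈ T.leaves → y ∈ T.leaves → x ≠ y → w x y = W (lcaSubtree T x y))

/-! ### Ultrametrics and ground-truth inputs -/

/-- `d` is an ultrametric on `V`. -/
def IsUltrametric (d : V → V → ℝ) : Prop :=
  (∀ x, d x x = 0) ∧ (∀ x y, d x y = 0 → x = y) ∧ (∀ x y, d x y = d y x) ∧
  (∀ x y, 0 ≤ d x y) ∧ (∀ x y z, d x y ≤ max (d x z) (d y z))

/-- `w` is a similarity graph generated from an ultrametric via a
non-increasing nonnegative function `f`. -/
def GeneratedFromUltrametric (w : V → V → ℝ) : Prop :=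
  ∃ (d : V → V → ℝ) (f : ℝ → ℝ),
    IsUltrametric d ∧
    (∀ a b : ℝ, 0 ≤ a → a ≤ b → f b ≤ f a) ∧
    (∀ a : ℝ, 0 ≤ a → 0 ≤ f a) ∧
    (∀ x y : V, x ≠ y → w x y = f (d x y))

/-- `w` is a dissimilarity graph generated from an ultrametric via a
non-decreasing nonnegative function `f`. -/
def GeneratedFromUltrametricDissim (w : V → V → ℝ) : Prop :=
  ∃ (d : V → V → ℝ) (f : ℝ → ℝ),
    IsUltrametric d ∧
    (∀ a b : ℝ, 0 ≤ a → a ≤ b → f a ≤ f b) ∧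
    (∀ a : ℝ, 0 ≤ a → 0 ≤ f a) ∧
    (∀ x y : V, x ≠ y → w x y = f (d x y))

/-- `w` is a similarity graph generated from a *minimal* ultrametric:
pairs with equal weights are at equal ultrametric distance. -/
def GeneratedFromMinimalUltrametric (w : V → V → ℝ) : Prop :=
  ∃ (d : V → V → ℝ) (f : ℝ → ℝ),
    IsUltrametric d ∧
    (∀ a b : ℝ, 0 ≤ a → a ≤ b → f b ≤ f a) ∧
    (∀ a : ℝ, 0 ≤ a → 0 ≤ f a) ∧
    (∀ x y : V, x ≠ y → w x y = f (d x y)) ∧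
    (∀ u v u' v' : V, u ≠ v → u' ≠ v' → f (d u v) = f (d u' v') → d u v = d u' v')

/-- Dissimilarity analogue of `GeneratedFromMinimalUltrametric`. -/
def GeneratedFromMinimalUltrametricDissim (w : V → V → ℝ) : Prop :=
  ∃ (d : V → V → ℝ) (f : ℝ → ℝ),
    IsUltrametric d ∧
    (∀ a b : ℝ, 0 ≤ a → a ≤ b → f a ≤ f b) ∧
    (∀ a : ℝ, 0 ≤ a → 0 ≤ f a) ∧
    (∀ x y : V, x ≠ y → w x y = f (d x y)) ∧
    (∀ u v u' v' : V, u ≠ v → u' ≠ v' → f (d u v) = f (d u' v') → d u v = d u' v')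

/-- `w` is a `δ`-adversarially-perturbed (similarity) ground-truth input. -/
def IsDeltaPerturbedGroundTruth (w : V → V → ℝ) (δ : ℝ) : Prop :=
  ∃ (d : V → V → ℝ) (f : ℝ → ℝ),
    IsUltrametric d ∧
    (∀ a b : ℝ, 0 ≤ a → a ≤ b → f b ≤ f a) ∧
    (∀ a : ℝ, 0 ≤ a → 0 ≤ f a) ∧
    (∀ x y : V, x ≠ y → f (d x y) ≤ w x y ∧ w x y ≤ δ * f (d x y))

end Defs

/-- The unit-weight clique on `V`. -/
def cliqueW (V : Type) [DecidableEq V] : V → V → ℝ := fun x y => if x = y then 0 else 1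

/-- Admissibility of a cost function (similarity setting): on every similarity graph
generated from a minimal ultrametric, a cluster tree minimizes the cost
iff it is a generating tree. -/
def Admissible (g : ℕ → ℕ → ℝ) : Prop :=
  ∀ (V : Type) [Fintype V] [DecidableEq V] (w : V → V → ℝ),
    GeneratedFromMinimalUltrametric w →
    ∀ T : ClusterTree V, IsClusterTree T →
      ((∀ T' : ClusterTree V, IsClusterTree T' → treeCost w g T ≤ treeCost w g T')
        ↔ IsGenerating w T)

/-- Admissibility of a value function (dissimilarity setting): on every dissimilarity
graph generated from a minimal ultrametric, a cluster tree maximizes the value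
iff it is a generating tree. -/
def AdmissibleDissim (g : ℕ → ℕ → ℝ) : Prop :=
  ∀ (V : Type) [Fintype V] [DecidableEq V] (w : V → V → ℝ),
    GeneratedFromMinimalUltrametricDissim w →
    ∀ T : ClusterTree V, IsClusterTree T →
      ((∀ T' : ClusterTree V, IsClusterTree T' → treeCost w g T' ≤ treeCost w g T)
        ↔ IsGeneratingDissim w T)

/-! ### Agglomerative (linkage) algorithms, modelled as a nondeterministic relation -/

/-- The initial state of an agglomerative algorithm: all singleton trees. -/
def initState (V : Type) [Fintype V] : Multiset (ClusterTree V) :=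
  Finset.univ.val.map ClusterTree.leaf

/-- One merge step of a generic linkage algorithm: merge two candidate trees whose
leaf-set distance `D` is best (w.r.t. `better a b` = "`a` is at least as good as `b`")
among all candidate pairs; any tie-breaking choice is allowed. -/
inductive MergeStep {V : Type} [DecidableEq V] (D : Finset V → Finset V → ℝ)
    (better : ℝ → ℝ → Prop) :
    Multiset (ClusterTree V) → Multiset (ClusterTree V) → Prop where
  | step : ∀ (rest : Multiset (ClusterTree V)) (T1 T2 : ClusterTree V),
      (∀ (T1' T2' : ClusterTree V) (rest' : Multiset (ClusterTree V)),
          T1 ::ₘ T2 ::ₘ rest = T1' ::ₘ T2' ::ₘ rest' →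
          better (D T1.leaves T2.leaves) (D T1'.leaves T2'.leaves)) →
      MergeStep D better (T1 ::ₘ T2 ::ₘ rest) (ClusterTree.node T1 T2 ::ₘ rest)

/-- `T` is a possible output of the linkage algorithm with dissimilarity/similarity
measure `D` and preference `better`. -/
def IsLinkageOutput {V : Type} [Fintype V] [DecidableEq V]
    (D : Finset V → Finset V → ℝ) (better : ℝ → ℝ → Prop) (T : ClusterTree V) : Prop :=
  Relation.ReflTransGen (MergeStep D better) (initState V) {T}

/-- Average-linkage measure. -/
def avgDist {V : Type} (w : V → V → ℝ) (A B : Finset V) : ℝ :=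
  cutWeight w A B / ((A.card : ℝ) * (B.card : ℝ))

/-- Single-linkage measure: `min_{x ∈ A, y ∈ B} w x y`. -/
def minLinkDist {V : Type} [DecidableEq V] (w : V → V → ℝ) (A B : Finset V) : ℝ :=
  WithTop.untopD 0 (((A ×ˢ B).image fun p => w p.1 p.2).min)

/-- Complete-linkage measure: `max_{x ∈ A, y ∈ B} w x y`. -/
def maxLinkDist {V : Type} [DecidableEq V] (w : V → V → ℝ) (A B : Finset V) : ℝ :=
  WithBot.unbotD 0 (((A ×ˢ B).image fun p => w p.1 p.2).max)

/-! ### Cuts -/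

section Cuts

variable {V : Type}

/-- `A ⊕ x` : add `x` to `A` if absent, remove it if present. -/
def symmDiffV [DecidableEq V] (A : Finset V) (x : V) : Finset V :=
  if x ∈ A then A.erase x else insert x A

/-- `(A, B)` is an `ε/|A ∪ B|`-locally-densest cut of the induced subgraph on `A ∪ B`. -/
def IsLocallyDensestCut [DecidableEq V] (w : V → V → ℝ) (ε : ℝ) (A B : Finset V) : Prop :=
  ∀ x ∈ A ∪ B,
    cutWeight w (symmDiffV A x) (symmDiffV B x) /
        (((symmDiffV A x).card : ℝ) * ((symmDiffV B x).card : ℝ)) ≤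
      (1 + ε / ((A ∪ B).card : ℝ)) *
        (cutWeight w A B / ((A.card : ℝ) * (B.card : ℝ)))

/-- Cluster trees obtained by recursively splitting along `ε/n`-locally-densest cuts. -/
def IsRecLocallyDensestCutTree [DecidableEq V] (w : V → V → ℝ) (ε : ℝ) :
    ClusterTree V → Prop
  | ClusterTree.leaf _ => True
  | ClusterTree.node L R =>
      IsLocallyDensestCut w ε L.leaves R.leaves ∧
      IsRecLocallyDensestCutTree w ε L ∧ IsRecLocallyDensestCutTree w ε R

/-- Cluster trees obtained by recursively splitting along `φ`-approximate sparsest cuts. -/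
def IsRecApproxSparsestCutTree [DecidableEq V] (w : V → V → ℝ) (φ : ℝ) :
    ClusterTree V → Prop
  | ClusterTree.leaf _ => True
  | ClusterTree.node L R =>
      (∀ S : Finset V, S ⊆ L.leaves ∪ R.leaves → S.Nonempty → S ⊂ L.leaves ∪ R.leaves →
        cutWeight w L.leaves R.leaves / ((L.leaves.card : ℝ) * (R.leaves.card : ℝ)) ≤
          φ * (cutWeight w S ((L.leaves ∪ R.leaves) \ S) /
            ((S.card : ℝ) * (((L.leaves ∪ R.leaves) \ S).card : ℝ)))) ∧
      IsRecApproxSparsestCutTree w φ L ∧ IsRecApproxSparsestCutTree w φ R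

/-- Cluster trees obtained by recursively splitting along exact sparsest cuts. -/
def IsRecSparsestCutTree [DecidableEq V] (w : V → V → ℝ) : ClusterTree V → Prop
  | ClusterTree.leaf _ => True
  | ClusterTree.node L R =>
      (∀ S : Finset V, S ⊆ L.leaves ∪ R.leaves → S.Nonempty → S ⊂ L.leaves ∪ R.leaves →
        cutWeight w L.leaves R.leaves / ((L.leaves.card : ℝ) * (R.leaves.card : ℝ)) ≤
          cutWeight w S ((L.leaves ∪ R.leaves) \ S) /
            ((S.card : ℝ) * (((L.leaves ∪ R.leaves) \ S).card : ℝ))) ∧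
      IsRecSparsestCutTree w L ∧ IsRecSparsestCutTree w R

/-- Cluster trees obtained by recursively splitting along exact densest cuts. -/
def IsRecDensestCutTree [DecidableEq V] (w : V → V → ℝ) : ClusterTree V → Prop
  | ClusterTree.leaf _ => True
  | ClusterTree.node L R =>
      (∀ S : Finset V, S ⊆ L.leaves ∪ R.leaves → S.Nonempty → S ⊂ L.leaves ∪ R.leaves →
        cutWeight w S ((L.leaves ∪ R.leaves) \ S) /
            ((S.card : ℝ) * (((L.leaves ∪ R.leaves) \ S).card : ℝ)) ≤
          cutWeight w L.leaves R.leaves / ((L.leaves.card : ℝ) * (R.leaves.card : ℝ))) ∧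
      IsRecDensestCutTree w L ∧ IsRecDensestCutTree w R

/-- Cluster trees produced by the bisection 2-Center algorithm (similarity setting). -/
def IsBisection2CenterTree [DecidableEq V] (w : V → V → ℝ) : ClusterTree V → Prop
  | ClusterTree.leaf _ => True
  | ClusterTree.node L R =>
      (∃ u ∈ L.leaves ∪ R.leaves, ∃ v ∈ L.leaves ∪ R.leaves, u ≠ v ∧
        (∃ r : ℝ,
          (∀ x ∈ L.leaves ∪ R.leaves, r ≤ max (w x u) (w x v)) ∧
          (∀ u' ∈ L.leaves ∪ R.leaves, ∀ v' ∈ L.leaves ∪ R.leaves, u' ≠ v' →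
            ∃ x ∈ L.leaves ∪ R.leaves, max (w x u') (w x v') ≤ r)) ∧
        L.leaves = (L.leaves ∪ R.leaves).filter fun x => w x v ≤ w x u) ∧
      IsBisection2CenterTree w L ∧ IsBisection2CenterTree w R

/-- Cluster trees produced by the bisection 2-Center algorithm (dissimilarity setting). -/
def IsBisection2CenterTreeDissim [DecidableEq V] (w : V → V → ℝ) : ClusterTree V → Prop
  | ClusterTree.leaf _ => True
  | ClusterTree.node L R =>
      (∃ u ∈ L.leaves ∪ R.leaves, ∃ v ∈ L.leaves ∪ R.leaves, u ≠ v ∧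
        (∃ r : ℝ,
          (∀ x ∈ L.leaves ∪ R.leaves, min (w x u) (w x v) ≤ r) ∧
          (∀ u' ∈ L.leaves ∪ R.leaves, ∀ v' ∈ L.leaves ∪ R.leaves, u' ≠ v' →
            ∃ x ∈ L.leaves ∪ R.leaves, r ≤ min (w x u') (w x v'))) ∧
        L.leaves = (L.leaves ∪ R.leaves).filter fun x => w x u ≤ w x v) ∧
      IsBisection2CenterTreeDissim w L ∧ IsBisection2CenterTreeDissim w R

end Cuts

/-! ### Pivot algorithms -/

mutual
/-- Trees produced by the fast pivot algorithm (Algorithm 6 of CKMM):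
pick a pivot `p`, split the other vertices into classes of equal similarity to `p`
(in strictly decreasing order of similarity), recurse, and attach along a spine. -/
inductive IsPivotTree {V : Type} [DecidableEq V] (w : V → V → ℝ) : ClusterTree V → Prop where
  | mk : ∀ (p : V) (T : ClusterTree V), PivotSpine w p T → IsPivotTree w T

/-- The spine of the pivot algorithm: `PivotSpine w p T` says that `T` is an iterated
union of the single-vertex tree on `p` with pivot trees of the similarity classes of
`p`, attached in strictly decreasing order of similarity to `p`. -/
inductive PivotSpine {V : Type} [DecidableEq V] (w : V → V → ℝ) : V → ClusterTree V → Prop where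
  | base : ∀ p : V, PivotSpine w p (ClusterTree.leaf p)
  | step : ∀ (p : V) (S T : ClusterTree V) (c : ℝ),
      PivotSpine w p S → IsPivotTree w T →
      (∀ v ∈ T.leaves, w p v = c) →
      (∀ u ∈ S.leaves, u ≠ p → c < w p u) →
      PivotSpine w p (ClusterTree.node S T)
end

mutual
/-- Trees produced by the robust pivot algorithm (Algorithm 7 of CKMM). -/
inductive IsRobustPivotTree {V : Type} [DecidableEq V] (w : V → V → ℝ) :
    ClusterTree V → Prop where
  | mk : ∀ (p : V) (T : ClusterTree V), RobustPivotSpine w T.leaves p T →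
      IsRobustPivotTree w T

/-- `RobustPivotSpine w U p T` : `T` is a prefix (a spine) of a run of the robust pivot
algorithm on the vertex set `U`, started at the pivot `p`.  At each step, `wi` is the
maximum weight of an edge in the cut `(Ṽ, U \ Ṽ)` (where `Ṽ` is the set of already
clustered vertices), and the next block is the least subset of `U \ Ṽ` closed under
adding any vertex having an edge of weight at least `wi` into the block or into `Ṽ`. -/
inductive RobustPivotSpine {V : Type} [DecidableEq V] (w : V → V → ℝ) :
    Finset V → V → ClusterTree V → Prop where
  | base : ∀ (U : Finset V) (p : V), RobustPivotSpine w U p (ClusterTree.leaf p)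
  | step : ∀ (U : Finset V) (p : V) (S T : ClusterTree V) (wi : ℝ),
      RobustPivotSpine w U p S →
      IsRobustPivotTree w T →
      (∃ p1 ∈ S.leaves, ∃ p2 ∈ U \ S.leaves, w p1 p2 = wi) →
      (∀ q1 ∈ S.leaves, ∀ q2 ∈ U \ S.leaves, w q1 q2 ≤ wi) →
      T.leaves ⊆ U \ S.leaves →
      (∀ u ∈ U \ S.leaves, (∃ v ∈ T.leaves ∪ S.leaves, wi ≤ w u v) → u ∈ T.leaves) →
      (∀ C : Finset V, C ⊆ U \ S.leaves →
        (∀ u ∈ U \ S.leaves, (∃ v ∈ C ∪ S.leaves, wi ≤ w u v) → u ∈ C) →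
        T.leaves ⊆ C) →
      RobustPivotSpine w U p (ClusterTree.node S T)
end

/-! ### Paths and caterpillars -/

/-- Attach the leaves from the list `l` one by one on top of `t` (a "spine"). -/
def spineTree {V : Type} : ClusterTree V → List V → ClusterTree V
  | t, [] => t
  | t, v :: vs => spineTree (ClusterTree.node t (ClusterTree.leaf v)) vs

/-- The unit-weight path on `n` vertices. -/
def pathW (n : ℕ) (i j : Fin n) : ℝ :=
  if (i : ℕ) + 1 = (j : ℕ) ∨ (j : ℕ) + 1 = (i : ℕ) then 1 else 0

/-! ### Random graphs: hierarchical stochastic block model -/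

/-- Index set for the potential edges of a graph on `Fin n`. -/
abbrev EdgeIdx (n : ℕ) := {p : Fin n × Fin n // p.1 < p.2}

/-- The (0/1) weight function of the random graph described by the edge
configuration `c`. -/
def configW {n : ℕ} (c : EdgeIdx n → Bool) (u v : Fin n) : ℝ :=
  if h : u < v then (if c ⟨(u, v), h⟩ then 1 else 0)
  else if h' : v < u then (if c ⟨(v, u), h'⟩ then 1 else 0)
  else 0

/-- The probability of the edge configuration `c` when each edge `e` is present
independently with probability `q e`. -/
def configProb {n : ℕ} (q : Fin n → Fin n → ℝ) (c : EdgeIdx n → Bool) : ℝ :=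
  ∏ e : EdgeIdx n, if c e then q e.val.1 e.val.2 else 1 - q e.val.1 e.val.2

/-- The expected cost `E[Γ(T) | ψ]` of a fixed cluster tree `T`, over the random
choice of the edges (with edge probabilities `q`). -/
def expectedCost {n : ℕ} (g : ℕ → ℕ → ℝ) (q : Fin n → Fin n → ℝ)
    (T : ClusterTree (Fin n)) : ℝ :=
  ∑ c : EdgeIdx n → Bool, configProb q c * treeCost (configW c) g T

/-- The (fixed, size-independent) data of a hierarchical stochastic block model with
`k` bottom-level clusters: a generating tree `Ttil` with weights `Wtil` in `(0,1)`
(the graph `G̃ₖ` on `k` vertices generated from an ultrametric), and intra-cluster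
probabilities `p i ∈ (0,1]` exceeding the weight of the parent of leaf `i`. -/
structure HSBM (k : ℕ) where
  Ttil : ClusterTree (Fin k)
  Wtil : ClusterTree (Fin k) → ℝ
  p : Fin k → ℝ
  ttil_isClusterTree : IsClusterTree Ttil
  wtil_pos : ∀ L R, IsSubtreeOf (ClusterTree.node L R) Ttil →
    0 < Wtil (ClusterTree.node L R)
  wtil_lt_one : ∀ L R, IsSubtreeOf (ClusterTree.node L R) Ttil →
    Wtil (ClusterTree.node L R) < 1
  wtil_mono : ∀ L R, IsSubtreeOf (ClusterTree.node L R) Ttil →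
    ∀ s, IsSubtreeOf s L ∨ IsSubtreeOf s R → Wtil (ClusterTree.node L R) ≤ Wtil s
  p_pos : ∀ i, 0 < p i
  p_le_one : ∀ i, p i ≤ 1
  p_gt_parent : ∀ L R, IsSubtreeOf (ClusterTree.node L R) Ttil →
    ∀ i : Fin k, L = ClusterTree.leaf i ∨ R = ClusterTree.leaf i →
      Wtil (ClusterTree.node L R) < p i

/-- The edge probabilities of the HSBM `M` with sparsity `α`, given the assignment
`ψ` of vertices to bottom-level clusters.  These are also the edge weights of the
expected graph `Ḡ`. -/
def HSBM.edgeProb {k : ℕ} (M : HSBM k) (α : ℝ) {n : ℕ} (ψ : Fin n → Fin k) :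
    Fin n → Fin n → ℝ := fun u v =>
  if ψ u = ψ v then α * M.p (ψ u)
  else α * M.Wtil (lcaSubtree M.Ttil (ψ u) (ψ v))

/-- The probability of the sample `ω = (ψ, c)` (labels and edges) of the HSBM `M`
with label proportions `f` and sparsity `α`. -/
def hsbmProb {k : ℕ} (M : HSBM k) (f : Fin k → ℝ) (α : ℝ) {n : ℕ}
    (ω : (Fin n → Fin k) × (EdgeIdx n → Bool)) : ℝ :=
  (∏ v : Fin n, f (ω.1 v)) * configProb (M.edgeProb α ω.1) ω.2

/-- The common cost `κ(n)` of all cluster trees of the unit-weight clique on `n`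
vertices (computed on the caterpillar tree). -/
def cliqueTreeCost (g : ℕ → ℕ → ℝ) (n : ℕ) : ℝ :=
  ∑ i ∈ Finset.range n, (i : ℝ) * g i 1

/-- The smoothness property: `max {g(n₁,n₂) : n₁+n₂ = n} = O(κ(n)/n²)`. -/
def SmoothCost (g : ℕ → ℕ → ℝ) : Prop :=
  ∃ C : ℝ, 0 < C ∧ ∀ n1 n2 : ℕ, 1 ≤ n1 → 1 ≤ n2 →
    g n1 n2 * (((n1 + n2 : ℕ) : ℝ)) ^ 2 ≤ C * cliqueTreeCost g (n1 + n2)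

end

/-- Lemma 1, CKMM: on a similarity ground-truth input, the cut
`(A, B)` around an arbitrary vertex `u` (where `A` consists of `u` together with all
vertices strictly more similar to `u` than `w_min`, the minimum weight incident to
`u`) consists solely of edges of weight `w_min`, has sparsity exactly `w_min`, and is
a sparsest cut. -/
theorem statement13 {V : Type} [Fintype V] [DecidableEq V] (w : V → V → ℝ)
    (hgt : GeneratedFromUltrametric w) (h2 : 2 ≤ Fintype.card V)
    (u : V) (wmin : ℝ)
    (hmin_att : ∃ v : V, v ≠ u ∧ w u v = wmin)
    (hmin_le : ∀ v : V, v ≠ u → wmin ≤ w u v)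
    (A B : Finset V)
    (hA : A = insert u (Finset.univ.filter fun x => wmin < w u x))
    (hB : B = Finset.univ \ A) :
    (∀ a ∈ A, ∀ b ∈ B, w a b = wmin) ∧
    cutWeight w A B / ((A.card : ℝ) * (B.card : ℝ)) = wmin ∧
    (∀ S : Finset V, S.Nonempty → S ≠ Finset.univ →
      wmin ≤ cutWeight w S (Finset.univ \ S) /
        ((S.card : ℝ) * (((Finset.univ : Finset V) \ S).card : ℝ))) := by
  obtain ⟨d, f, ⟨hd0, hdeq, hdsym, hdnn, hdult⟩, hfmono, hfnn, hw⟩ := hgt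
  obtain ⟨v0, hv0ne, hv0⟩ := hmin_att
  -- symmetry of w on distinct pairs
  have wsymm : ∀ x y : V, x ≠ y → w x y = w y x := by
    intro x y hxy
    rw [hw x y hxy, hw y x hxy.symm, hdsym]
  -- every edge has weight at least wmin
  have hge : ∀ x y : V, x ≠ y → wmin ≤ w x y := by
    intro x y hxy
    by_cases hx : x = u
    · subst hx; exact hmin_le y hxy.symm
    by_cases hy : y = u
    · rw [wsymm x y hxy, hy]; exact hmin_le x hx
    have h1 : d x y ≤ max (d x u) (d y u) := hdult x y u
    rw [hw x y hxy]
    rcases le_total (d x u) (d y u) with hc | hc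
    · have : d x y ≤ d y u := le_trans h1 (by simp [hc])
      calc wmin ≤ w u y := hmin_le y hy
        _ = f (d y u) := by rw [hw u y (Ne.symm hy), hdsym]
        _ ≤ f (d x y) := hfmono _ _ (hdnn x y) this
    · have : d x y ≤ d x u := le_trans h1 (by simp [hc])
      calc wmin ≤ w u x := hmin_le x hx
        _ = f (d x u) := by rw [hw u x (Ne.symm hx), hdsym]
        _ ≤ f (d x y) := hfmono _ _ (hdnn x y) this
  -- membership facts
  have hBfact : ∀ b ∈ B, b ≠ u ∧ w u b = wmin := by
    intro b hb
    rw [hB, Finset.mem_sdiff] at hb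
    have hbA := hb.2
    rw [hA, Finset.mem_insert] at hbA
    push_neg at hbA
    obtain ⟨hbu, hbf⟩ := hbA
    rw [Finset.mem_filter] at hbf
    push_neg at hbf
    have hble : w u b ≤ wmin := hbf (Finset.mem_univ b)
    exact ⟨hbu, le_antisymm hble (hmin_le b hbu)⟩
  have hedge : ∀ a ∈ A, ∀ b ∈ B, w a b = wmin := by
    intro a ha b hb
    obtain ⟨hbu, hwub⟩ := hBfact b hb
    have hab : a ≠ b := by
      rintro rfl
      rw [hB, Finset.mem_sdiff] at hb
      exact hb.2 ha
    rw [hA, Finset.mem_insert] at ha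
    rcases ha with rfl | ha
    · exact hwub
    · rw [Finset.mem_filter] at ha
      by_cases hau : a = u
      · rw [hau]; exact hwub
      have hwua : wmin < w u a := ha.2
      -- d u a < d u b
      have hlt : d u a < d u b := by
        by_contra hle
        push_neg at hle
        have := hfmono _ _ (hdnn u b) hle
        rw [← hw u a (Ne.symm hau), ← hw u b (Ne.symm hbu)] at this
        rw [hwub] at this
        exact absurd hwua (not_lt.mpr this)
      have h1 : d a b ≤ d u b := by
        have := hdult a b u
        rw [hdsym a u, hdsym b u] at this
        exact le_trans this (max_le (le_of_lt hlt) le_rfl)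
      have h2 : d u b ≤ d a b := by
        have := hdult u b a
        rw [hdsym b a] at this
        rcases max_cases (d u a) (d a b) with ⟨he, _⟩ | ⟨he, _⟩
        · rw [he] at this; exact absurd this (not_le.mpr hlt)
        · rwa [he] at this
      have : d a b = d u b := le_antisymm h1 h2
      rw [hw a b hab, this, ← hw u b (Ne.symm hbu), hwub]
  refine ⟨hedge, ?_, ?_⟩
  · -- sparsity of (A, B)
    have hAne : u ∈ A := by rw [hA]; exact Finset.mem_insert_self u _
    have hBne : v0 ∈ B := by
      rw [hB, Finset.mem_sdiff]
      refine ⟨Finset.mem_univ _, ?_⟩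
      rw [hA, Finset.mem_insert]
      push_neg
      exact ⟨hv0ne, by rw [Finset.mem_filter]; push_neg; intro _; rw [hv0]⟩
    have hAcard : (0 : ℝ) < A.card := by
      exact_mod_cast Finset.card_pos.mpr ⟨u, hAne⟩
    have hBcard : (0 : ℝ) < B.card := by
      exact_mod_cast Finset.card_pos.mpr ⟨v0, hBne⟩
    have hcw : cutWeight w A B = (A.card : ℝ) * (B.card : ℝ) * wmin := by
      unfold cutWeight
      rw [Finset.sum_congr rfl fun a ha => Finset.sum_congr rfl fun b hb => hedge a ha b hb]
      simp [Finset.sum_const, mul_assoc]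
    rw [hcw]
    field_simp
  · -- sparsest cut
    intro S hSne hSuniv
    have hScard : (0 : ℝ) < S.card := by
      exact_mod_cast Finset.card_pos.mpr hSne
    have hScne : (Finset.univ \ S).Nonempty := by
      rw [Finset.sdiff_nonempty]
      intro h
      exact hSuniv (Finset.eq_univ_iff_forall.mpr fun x => h (Finset.mem_univ x))
    have hSccard : (0 : ℝ) < ((Finset.univ \ S : Finset V).card : ℝ) := by
      exact_mod_cast Finset.card_pos.mpr hScne
    rw [le_div_iff₀ (by positivity)]
    unfold cutWeight
    calc wmin * ((S.card : ℝ) * ((Finset.univ \ S : Finset V).card : ℝ))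
        = ∑ a ∈ S, ∑ b ∈ Finset.univ \ S, wmin := by
          simp [Finset.sum_const]; ring
      _ ≤ ∑ a ∈ S, ∑ b ∈ Finset.univ \ S, w a b := by
          refine Finset.sum_le_sum fun a ha => Finset.sum_le_sum fun b hb => ?_
          refine hge a b ?_
          rintro rfl
          rw [Finset.mem_sdiff] at hb
          exact hb.2 ha
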